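/- Let u = 3+2√2 and Δ_n = N_{ℚ(√2)/ℚ}(u^n - 1). Then Δ_1 = -4, Δ_2 = -32, Δ_3 = -196, Δ_4 = -1152, Δ_5 = -6724, Δ_6 = -39200, and every term Δ_n with n ≥ 3 has a primitive prime divisor (a prime dividing Δ_n but no earlier nonzero term). -/

import Mathlib

/-!
Let `e n = N(Φₙ(u))` (`cyclotomicNorm n`); it divides `Δₙ`. Since `Φₙ` is palindromic for
`n ≥ 2` and `ū = u⁻¹`, `e n = ū ^ φ(n) * Φₙ(u) ^ 2 > ((u - 1) ^ 2 * ū) ^ φ(n) = 4 ^ φ(n)`.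

A prime `p ∣ e n` that already divides an earlier `Δₘ` is controlled. For odd `p` the order `r`
of `u` modulo `p` is a proper divisor of `n`, and for a prime `q ∣ n / r` the norm of
`1 + u ^ (n / q) + ⋯ + u ^ ((q - 1) * n / q)`, a multiple of `e n`, is `≡ q ^ 2 (mod p)`. This
forces `p = q ∣ n`, and then the same sum is `p * (1 + p * t)`, so `p ^ 3 ∤ e n`. For `p = 2`
one always has `8 ∤ e n`. Without a primitive prime divisor we would get
`e n ∣ (2 * n) ^ 2 ≤ 4 ^ φ(n)`; the last inequality holds for all `n ≥ 3` except
`3, 4, 6, 10, 12`, which are checked by computation.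
-/

open Polynomial Finset

namespace Zsqrtd

variable {d : ℤ}

theorem norm_dvd_norm {a b : ℤ√d} (h : a ∣ b) : a.norm ∣ b.norm :=
  map_dvd normMonoidHom h

theorem intCast_dvd_norm_sub_norm {c : ℤ} {a b : ℤ√d} (h : (c : ℤ√d) ∣ a - b) :
    c ∣ a.norm - b.norm := by
  have hstar : (c : ℤ√d) ∣ star (a - b) := by
    have h' := map_dvd (starRingEnd (ℤ√d)) h
    rwa [map_intCast] at h'
  rw [← intCast_dvd_intCast (d := d), Int.cast_sub, norm_eq_mul_conj, norm_eq_mul_conj,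
    show a * star a - b * star b = (a - b) * star a + b * star (a - b) by rw [star_sub]; ring]
  exact dvd_add (h.mul_right _) (hstar.mul_left _)

theorem intCast_dvd_of_dvd_mul_self {p : ℤ} (hp : Prime p) (hpd : ¬p ∣ 2 * d) {z : ℤ√d}
    (h : (p : ℤ√d) ∣ z * z) : (p : ℤ√d) ∣ z := by
  have hp2 : ¬p ∣ 2 := fun h2 => hpd (h2.mul_right d)
  have hpd' : ¬p ∣ d := fun h2 => hpd (h2.mul_left 2)
  rw [intCast_dvd] at h ⊢
  obtain ⟨hre, him⟩ := h
  simp only [re_mul, im_mul] at hre him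
  rcases hp.dvd_or_dvd ((hp.dvd_or_dvd (show p ∣ 2 * (z.re * z.im) by
      convert him using 1; ring)).resolve_left hp2) with hr | hi
  · refine ⟨hr, hp.dvd_of_dvd_pow (n := 2) ((hp.dvd_or_dvd ?_).resolve_left hpd')⟩
    convert dvd_sub hre (hr.mul_right z.re) using 1; ring
  · refine ⟨hp.dvd_of_dvd_pow (n := 2) ?_, hi⟩
    convert dvd_sub hre ((hi.mul_left (d * z.im))) using 1; ring

theorem intCast_dvd_norm_sub_one_iff {p : ℤ} (hp : Prime p) (hpd : ¬p ∣ 2 * d) {z : ℤ√d}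
    (hz : z.norm = 1) : p ∣ (z - 1).norm ↔ (p : ℤ√d) ∣ z - 1 := by
  refine ⟨fun h => intCast_dvd_of_dvd_mul_self hp hpd ?_, fun h => ?_⟩
  · have hz' : z * star z = 1 := by rw [← norm_eq_mul_conj, hz, Int.cast_one]
    have h' := ((intCast_dvd_intCast (d := d) _ _).mpr h).mul_left (-z)
    rw [norm_eq_mul_conj] at h'
    convert h' using 1
    rw [star_sub, star_one]
    linear_combination (z - 1) * hz'
  · simpa using intCast_dvd_norm_sub_norm (b := 0) (by simpa using h)

theorem norm_one_add_sq {z : ℤ√d} (hz : z.norm = 1) : (1 + z ^ 2).norm = 4 * z.re ^ 2 := by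
  rw [norm_def] at hz ⊢
  simp only [re_add, im_add, re_one, im_one, sq, re_mul, im_mul]
  linear_combination (z.re * z.re - d * z.im * z.im - 1) * hz

end Zsqrtd

theorem dvd_geom_sum_sub_of_dvd_sub_one {R : Type*} [CommRing R] {c x : R} (h : c ∣ x - 1)
    (q : ℕ) : c ∣ ∑ i ∈ range q, x ^ i - q := by
  rw [show ∑ i ∈ range q, x ^ i - q = ∑ i ∈ range q, (x ^ i - 1) by simp [sum_sub_distrib]]
  exact dvd_sum fun i _ => h.trans (sub_one_dvd_pow_sub_one x i)

theorem dvd_pow_sub_one_iff_orderOf_dvd {R : Type*} [CommRing R] (a x : R) (k : ℕ) :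
    a ∣ x ^ k - 1 ↔ orderOf (Ideal.Quotient.mk (Ideal.span {a}) x) ∣ k := by
  rw [orderOf_dvd_iff_pow_eq_one, ← map_pow, ← sub_eq_zero, ← map_one (Ideal.Quotient.mk _),
    ← map_sub, Ideal.Quotient.eq_zero_iff_dvd]

namespace Polynomial

theorem cyclotomic_dvd_geom_sum_X_pow_div (R : Type*) [CommRing R] {n q : ℕ} (hq : 1 < q)
    (hqn : q ∣ n) : cyclotomic n R ∣ ∑ i ∈ range q, (X ^ (n / q)) ^ i := by
  rcases Nat.eq_zero_or_pos n with rfl | hn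
  · simp
  have hk : 0 < n / q := Nat.div_pos (Nat.le_of_dvd hn hqn) (by omega)
  have hmem : n / q ∈ n.properDivisors :=
    Nat.mem_properDivisors.mpr ⟨Nat.div_dvd_of_dvd hqn, Nat.div_lt_self hn hq⟩
  obtain ⟨c, hc⟩ := X_pow_sub_one_mul_cyclotomic_dvd_X_pow_sub_one_of_dvd R hmem
  refine ⟨c, (monic_X_pow_sub_C (1 : R) hk.ne').isRegular.left ?_⟩
  simp only [C_1]
  rw [← mul_assoc, ← hc, mul_comm, geom_sum_mul, ← pow_mul, Nat.div_mul_cancel hqn]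

theorem reverse_prod_of_domain {R ι : Type*} [CommSemiring R] [NoZeroDivisors R] (s : Finset ι)
    (f : ι → R[X]) : (∏ i ∈ s, f i).reverse = ∏ i ∈ s, (f i).reverse := by
  classical
  induction s using Finset.induction_on with
  | empty => simpa using reverse_C (1 : R)
  | insert i s hi ih => rw [prod_insert hi, prod_insert hi, reverse_mul_of_domain, ih]

theorem reverse_X_pow_sub_one (R : Type*) [CommRing R] [Nontrivial R] (n : ℕ) :
    (X ^ n - 1 : R[X]).reverse = -(X ^ n - 1) := by
  have h := reverse_add_C (X ^ n : R[X]) (-1)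
  rw [C_neg, C_1, ← sub_eq_add_neg] at h
  have hXn : (X ^ n : R[X]).reverse = 1 := by
    have h1 := reverse_mul_X_pow (C (1 : R)) n
    rwa [reverse_C, C_1, one_mul] at h1
  rw [h, hXn, natDegree_X_pow]
  ring

theorem reverse_cyclotomic {R : Type*} [CommRing R] [IsDomain R] {n : ℕ} (hn : n ≠ 1) :
    (cyclotomic n R).reverse = cyclotomic n R := by
  induction n using Nat.strong_induction_on with
  | _ n ih =>
  rcases Nat.eq_zero_or_pos n with rfl | hn0
  · simpa using reverse_C (1 : R)
  have h1 : 1 ∈ n.properDivisors := Nat.one_mem_properDivisors_iff_one_lt.mpr (by omega)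
  set P := ∏ d ∈ n.properDivisors.erase 1, cyclotomic d R
  have hfactor : cyclotomic n R * ((X - 1) * P) = X ^ n - 1 := by
    rw [← prod_cyclotomic_eq_X_pow_sub_one hn0, ← Nat.cons_self_properDivisors hn0.ne',
      prod_cons, ← mul_prod_erase _ _ h1, cyclotomic_one]
  have hP : P.reverse = P := by
    rw [reverse_prod_of_domain]
    refine prod_congr rfl fun d hd => ih d ?_ (mem_erase.mp hd).1
    exact (Nat.mem_properDivisors.mp (mem_erase.mp hd).2).2
  have hne : (X - 1) * P ≠ 0 := by
    intro h0
    rw [h0, mul_zero] at hfactor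
    exact X_pow_sub_C_ne_zero hn0 (1 : R) (by simpa using hfactor.symm)
  have hrev := congrArg reverse hfactor
  rw [reverse_mul_of_domain, reverse_mul_of_domain, hP, reverse_X_pow_sub_one R n,
    ← hfactor] at hrev
  have hX : (X - 1 : R[X]).reverse = -(X - 1) := by simpa using reverse_X_pow_sub_one R 1
  rw [hX] at hrev
  exact mul_right_cancel₀ hne (by linear_combination -hrev)

theorem cyclotomic_eval_invOf_mul_pow_totient {S : Type*} [CommRing S] {n : ℕ} (hn : n ≠ 1)
    (x : S) [Invertible x] :
    (cyclotomic n S).eval (⅟x) * x ^ n.totient = (cyclotomic n S).eval x := by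
  have h := eval₂_reverse_mul_pow (Int.castRingHom S) x (cyclotomic n ℤ)
  rwa [reverse_cyclotomic hn, natDegree_cyclotomic, ← eval_map, ← eval_map,
    map_cyclotomic_int] at h

end Polynomial

namespace Nat

theorem le_totient_sq_of_odd {n : ℕ} (hn : Odd n) : n ≤ n.totient ^ 2 := by
  induction n using Nat.recOnPosPrimePosCoprime with
  | zero => simp at hn
  | one => simp
  | prime_pow p k hp hk =>
    have hp3 : 3 ≤ p := by
      have h2 : p ≠ 2 := by
        rintro rfl
        exact Nat.not_odd_iff_even.mpr ((Nat.even_pow).mpr ⟨even_two, hk.ne'⟩) hn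
      have := hp.two_le
      omega
    have hp_le : p ≤ (p - 1) ^ 2 := by
      obtain ⟨q, rfl⟩ := Nat.exists_eq_add_of_le hp3
      rw [show 3 + q - 1 = q + 2 by omega]
      nlinarith
    rw [totient_prime_pow hp hk]
    calc p ^ k ≤ p ^ (2 * (k - 1)) * p := by
          rw [← pow_succ]; exact Nat.pow_le_pow_right (by omega) (by omega)
      _ ≤ p ^ (2 * (k - 1)) * (p - 1) ^ 2 := Nat.mul_le_mul_left _ hp_le
      _ = (p ^ (k - 1) * (p - 1)) ^ 2 := by rw [mul_pow, pow_mul']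
  | coprime a b _ _ hab iha ihb =>
    rw [totient_mul hab, mul_pow]
    exact Nat.mul_le_mul (iha (Nat.Odd.of_mul_left hn)) (ihb (Nat.Odd.of_mul_right hn))

theorem le_two_mul_totient_sq (n : ℕ) : n ≤ 2 * n.totient ^ 2 := by
  rcases eq_or_ne n 0 with rfl | hn
  · simp
  obtain ⟨k, m, hm, rfl⟩ := exists_eq_two_pow_mul_odd hn
  have h2 : 2 ^ k ≤ 2 * (2 ^ k).totient ^ 2 := by
    rcases Nat.eq_zero_or_pos k with rfl | hk
    · simp
    rw [totient_prime_pow prime_two hk]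
    calc 2 ^ k ≤ 2 ^ (2 * (k - 1) + 1) := Nat.pow_le_pow_right two_pos (by omega)
      _ = _ := by rw [pow_succ, pow_mul']; ring
  rw [totient_mul (Nat.Coprime.pow_left k (Nat.coprime_two_left.mpr hm)), mul_pow]
  calc 2 ^ k * m ≤ 2 * (2 ^ k).totient ^ 2 * m.totient ^ 2 :=
        Nat.mul_le_mul h2 (le_totient_sq_of_odd hm)
    _ = _ := by ring

theorem dvd_sq_of_forall_prime_dvd {a b : ℕ} (ha : a ≠ 0)
    (h : ∀ p : ℕ, p.Prime → p ∣ a → p ∣ b ∧ ¬p ^ 3 ∣ a) : a ∣ b ^ 2 := by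
  rcases eq_or_ne b 0 with rfl | hb
  · simp
  refine (Nat.factorization_le_iff_dvd ha (pow_ne_zero 2 hb)).mp fun p => ?_
  by_cases hp : p.Prime
  · by_cases hpa : p ∣ a
    · obtain ⟨hpb, hcube⟩ := h p hp hpa
      have hb1 := hp.factorization_pos_of_dvd hb hpb
      have ha3 : ¬3 ≤ a.factorization p := fun h3 =>
        hcube ((hp.pow_dvd_iff_le_factorization ha).mpr h3)
      rw [Nat.factorization_pow]
      simp only [Finsupp.smul_apply, smul_eq_mul]
      omega
    · simp [Nat.factorization_eq_zero_of_not_dvd hpa]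
  · simp [Nat.factorization_eq_zero_of_not_prime _ hp]

end Nat

theorem four_mul_sq_le_two_pow {k : ℕ} (hk : 8 ≤ k) : 4 * k ^ 2 ≤ 2 ^ k := by
  induction k, hk using Nat.le_induction with
  | base => norm_num
  | succ k hk ih =>
    rw [pow_succ 2 k]
    nlinarith

namespace LehmerPierce

def u : ℤ√2 := ⟨3, 2⟩

theorem norm_u : u.norm = 1 := by decide

instance : Invertible u := ⟨star u, by decide, by decide⟩

theorem norm_u_pow (k : ℕ) : (u ^ k).norm = 1 := by
  change Zsqrtd.normMonoidHom (u ^ k) = 1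
  rw [map_pow]
  exact (congrArg (· ^ k) norm_u).trans (one_pow k)

theorem two_mul_le_two_pow_totient {n : ℕ} (hn : 3 ≤ n)
    (hexc : n ∉ ({3, 4, 6, 10, 12} : Finset ℕ)) : 2 * n ≤ 2 ^ n.totient := by
  rcases Nat.lt_or_ge n 99 with hlt | hge
  · have hsmall : ∀ n < 99, 3 ≤ n → n ∉ ({3, 4, 6, 10, 12} : Finset ℕ) →
        2 * n ≤ 2 ^ n.totient := by
      decide
    exact hsmall n hlt hn hexc
  · have h := Nat.le_two_mul_totient_sq n
    have h8 : 8 ≤ n.totient := by nlinarith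
    nlinarith [four_mul_sq_le_two_pow h8]

noncomputable def cyclotomicNorm (n : ℕ) : ℤ := ((cyclotomic n (ℤ√2)).eval u).norm

theorem cyclotomicNorm_mul_pow_totient {n : ℕ} (hn : n ≠ 1) :
    (cyclotomicNorm n : ℤ√2) * u ^ n.totient = (cyclotomic n (ℤ√2)).eval u ^ 2 := by
  rw [cyclotomicNorm, Zsqrtd.norm_eq_mul_conj, mul_assoc, ← starRingEnd_apply,
    ← cyclotomic.eval_apply, starRingEnd_apply, show star u = ⅟u from rfl,
    cyclotomic_eval_invOf_mul_pow_totient hn, sq]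

noncomputable def toReal : ℤ√2 →+* ℝ :=
  Zsqrtd.lift ⟨√2, by rw [Real.mul_self_sqrt zero_le_two]; norm_num⟩

theorem four_pow_totient_lt_cyclotomicNorm {n : ℕ} (hn : 2 ≤ n) :
    4 ^ n.totient < cyclotomicNorm n := by
  set U := toReal u
  have hU : 1 < U := by
    have : U = 3 + 2 * √2 := by simp [U, toReal, u]
    rw [this]; linarith [Real.sqrt_nonneg 2]
  have hU_sq : (U - 1) ^ 2 = 4 * U := by
    have h := congrArg toReal (show (u - 1) ^ 2 = 4 * u by decide)
    rwa [map_pow, map_sub, map_one, map_mul, map_ofNat] at h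
  have hnorm : (cyclotomicNorm n : ℝ) * U ^ n.totient = (cyclotomic n ℝ).eval U ^ 2 := by
    simpa [U, cyclotomic.eval_apply] using
      congrArg toReal (cyclotomicNorm_mul_pow_totient (by omega : n ≠ 1))
  have hlow := sub_one_pow_totient_lt_cyclotomic_eval hn hU
  have hUpos : 0 < U ^ n.totient := pow_pos (by linarith) _
  have hlt : (4 : ℝ) ^ n.totient * U ^ n.totient < cyclotomicNorm n * U ^ n.totient := by
    calc (4 : ℝ) ^ n.totient * U ^ n.totient = ((U - 1) ^ n.totient) ^ 2 := by
          rw [← mul_pow, ← hU_sq, ← pow_mul, ← pow_mul, mul_comm]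
      _ < (cyclotomic n ℝ).eval U ^ 2 := by gcongr
      _ = _ := hnorm.symm
  exact_mod_cast lt_of_mul_lt_mul_right hlt hUpos.le

theorem cyclotomicNorm_dvd_norm_pow_sub_one (n : ℕ) :
    cyclotomicNorm n ∣ (u ^ n - 1).norm := by
  apply Zsqrtd.norm_dvd_norm (a := (cyclotomic n (ℤ√2)).eval u)
  simpa using eval_dvd (x := u) (cyclotomic.dvd_X_pow_sub_one n (ℤ√2))

theorem cyclotomicNorm_dvd_norm_geom_sum {n q : ℕ} (hq : 1 < q) (hqn : q ∣ n) :
    cyclotomicNorm n ∣ (∑ i ∈ range q, (u ^ (n / q)) ^ i).norm := by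
  apply Zsqrtd.norm_dvd_norm (a := (cyclotomic n (ℤ√2)).eval u)
  simpa [eval_finsetSum] using
    eval_dvd (x := u) (cyclotomic_dvd_geom_sum_X_pow_div (ℤ√2) hq hqn)

theorem dvd_sq_of_dvd_cyclotomicNorm {c : ℤ} {n q : ℕ} (hq : 1 < q) (hqn : q ∣ n)
    (hc : (c : ℤ√2) ∣ u ^ (n / q) - 1) (hcn : c ∣ cyclotomicNorm n) :
    c ∣ (q : ℤ) ^ 2 := by
  have hsum : (c : ℤ√2) ∣ ∑ i ∈ range q, (u ^ (n / q)) ^ i - ((q : ℤ) : ℤ√2) := by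
    simpa using dvd_geom_sum_sub_of_dvd_sub_one hc q
  have h := Zsqrtd.intCast_dvd_norm_sub_norm hsum
  rw [Zsqrtd.norm_intCast] at h
  rw [sq]
  simpa using dvd_sub (hcn.trans (cyclotomicNorm_dvd_norm_geom_sum hq hqn)) h

theorem not_pow_three_dvd_cyclotomicNorm {p n : ℕ} (hp : Odd p) (hp1 : 1 < p) (hpn : p ∣ n)
    (hu : (p : ℤ√2) ∣ u ^ (n / p) - 1) : ¬(p : ℤ) ^ 3 ∣ cyclotomicNorm n := by
  obtain ⟨w, hw⟩ := hu
  obtain ⟨t, ht⟩ := odd_sq_dvd_geom_sum₂_sub (R := ℤ√2) 1 w hp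
  simp only [one_pow, mul_one] at ht
  have hsum :
      ∑ i ∈ range p, (u ^ (n / p)) ^ i = ((p : ℤ) : ℤ√2) * (1 + (p : ℤ) * t) := by
    rw [show u ^ (n / p) = 1 + p * w by rw [← hw]; ring]
    push_cast
    linear_combination ht
  have hcong : (p : ℤ) ∣ (1 + ((p : ℤ) : ℤ√2) * t).norm - (1 : ℤ√2).norm :=
    Zsqrtd.intCast_dvd_norm_sub_norm ⟨t, by ring⟩
  intro hcube
  have h := hcube.trans (cyclotomicNorm_dvd_norm_geom_sum hp1 hpn)
  rw [hsum, Zsqrtd.norm_mul, Zsqrtd.norm_intCast,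
    show (p : ℤ) ^ 3 = p * p * p by ring] at h
  have hp0 : (p : ℤ) * p ≠ 0 := by positivity
  have h1 : (p : ℤ) ∣ 1 := by
    simpa using dvd_sub ((mul_dvd_mul_iff_left hp0).mp h) hcong
  have := Int.le_of_dvd one_pos h1
  omega

theorem not_eight_dvd_cyclotomicNorm_of_four_dvd {n : ℕ} (hn : 4 ∣ n) :
    ¬8 ∣ cyclotomicNorm n := by
  obtain ⟨j, rfl⟩ := hn
  set s := u ^ j
  have hsum : ∑ i ∈ range 2, (u ^ (4 * j / 2)) ^ i = 1 + s ^ 2 := by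
    rw [sum_range_succ, sum_range_one, show 4 * j / 2 = j * 2 by omega, pow_mul]
    ring
  have hs : s.re * s.re - 2 * s.im * s.im = 1 := by rw [← Zsqrtd.norm_def]; exact norm_u_pow j
  have h := cyclotomicNorm_dvd_norm_geom_sum (q := 2) (n := 4 * j) (by norm_num)
    (dvd_mul_of_dvd_left (by norm_num) j)
  rw [hsum, Zsqrtd.norm_one_add_sq (norm_u_pow j)] at h
  intro h8
  obtain ⟨c, hc⟩ := (mul_dvd_mul_iff_left (by norm_num : (4 : ℤ) ≠ 0)).mp
    ((show (4 * 2 : ℤ) ∣ 8 by norm_num).trans (h8.trans h))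
  have h1 : (2 : ℤ) ∣ 1 := ⟨c - s.im * s.im, by linear_combination -hs + hc⟩
  norm_num at h1

theorem not_two_dvd_cyclotomicNorm_of_odd_dvd {n q : ℕ} (hq : Odd q) (hq1 : 1 < q)
    (hqn : q ∣ n) : ¬2 ∣ cyclotomicNorm n := by
  intro h2
  have hu1 : ((2 : ℤ) : ℤ√2) ∣ u - 1 := ⟨⟨1, 1⟩, by decide⟩
  have hu : ((2 : ℤ) : ℤ√2) ∣ u ^ (n / q) - 1 := hu1.trans (sub_one_dvd_pow_sub_one _ _)
  exact Int.not_even_iff_odd.mpr (by exact_mod_cast hq.pow)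
    (even_iff_two_dvd.mpr (dvd_sq_of_dvd_cyclotomicNorm hq1 hqn hu h2))

theorem not_eight_dvd_cyclotomicNorm {n : ℕ} (hn : 3 ≤ n) : ¬8 ∣ cyclotomicNorm n := by
  obtain ⟨k, m, hm, rfl⟩ := Nat.exists_eq_two_pow_mul_odd (by omega : n ≠ 0)
  rcases eq_or_ne m 1 with rfl | hm1
  · refine not_eight_dvd_cyclotomicNorm_of_four_dvd (dvd_mul_of_dvd_left ?_ 1)
    have hk : 2 ≤ k := by
      by_contra! hk
      interval_cases k <;> omega
    exact (pow_dvd_pow 2 hk : 2 ^ 2 ∣ 2 ^ k)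
  · exact fun h8 => not_two_dvd_cyclotomicNorm_of_odd_dvd (hm.of_dvd_nat (Nat.minFac_dvd m))
      (Nat.minFac_prime hm1).one_lt ((Nat.minFac_dvd m).mul_left _)
      ((show (2 : ℤ) ∣ 8 by norm_num).trans h8)

theorem natCast_dvd_norm_pow_sub_one_iff {p : ℕ} (hp : p.Prime) (hp2 : p ≠ 2) (m : ℕ) :
    (p : ℤ) ∣ (u ^ m - 1).norm ↔ (p : ℤ√2) ∣ u ^ m - 1 := by
  have hpZ : Prime (p : ℤ) := Nat.prime_iff_prime_int.mp hp
  have hp4 : ¬(p : ℤ) ∣ 2 * 2 := fun h =>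
    hp2 ((Nat.prime_dvd_prime_iff_eq hp Nat.prime_two).mp
      (by exact_mod_cast (hpZ.dvd_or_dvd h).elim id id))
  simpa using Zsqrtd.intCast_dvd_norm_sub_one_iff hpZ hp4 (norm_u_pow m)

theorem dvd_and_not_pow_three_dvd_cyclotomicNorm {p n m : ℕ} (hp : p.Prime) (hp2 : p ≠ 2)
    (hpn : (p : ℤ) ∣ cyclotomicNorm n) (hm : 0 < m) (hmn : m < n)
    (hpm : (p : ℤ) ∣ (u ^ m - 1).norm) : p ∣ n ∧ ¬(p : ℤ) ^ 3 ∣ cyclotomicNorm n := by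
  set r := orderOf (Ideal.Quotient.mk (Ideal.span {(p : ℤ√2)}) u)
  have hord (k : ℕ) : (p : ℤ) ∣ (u ^ k - 1).norm ↔ r ∣ k :=
    (natCast_dvd_norm_pow_sub_one_iff hp hp2 k).trans (dvd_pow_sub_one_iff_orderOf_dvd _ u k)
  have hrn : r ∣ n := (hord n).mp (hpn.trans (cyclotomicNorm_dvd_norm_pow_sub_one n))
  have hrn' : r < n := (Nat.le_of_dvd hm ((hord m).mp hpm)).trans_lt hmn
  obtain ⟨s, hs⟩ := hrn
  have hs1 : s ≠ 1 := by rintro rfl; omega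
  set q := s.minFac
  have hq : q.Prime := Nat.minFac_prime hs1
  have hqn : q ∣ n := hs ▸ (Nat.minFac_dvd s).mul_left r
  have hrq : r ∣ n / q := ⟨s / q, by rw [hs, Nat.mul_div_assoc r (Nat.minFac_dvd s)]⟩
  have hu : (p : ℤ√2) ∣ u ^ (n / q) - 1 := (dvd_pow_sub_one_iff_orderOf_dvd _ u _).mpr hrq
  have hpq : p = q := by
    have h := dvd_sq_of_dvd_cyclotomicNorm hq.one_lt hqn (by simpa using hu) hpn
    exact (Nat.prime_dvd_prime_iff_eq hp hq).mp (hp.dvd_of_dvd_pow (by exact_mod_cast h))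
  subst hpq
  exact ⟨hqn, not_pow_three_dvd_cyclotomicNorm (hp.odd_of_ne_two hp2) hp.one_lt hqn hu⟩

theorem exists_primitive_prime_dvd_of_notMem {n : ℕ} (hn : 3 ≤ n)
    (hexc : n ∉ ({3, 4, 6, 10, 12} : Finset ℕ)) :
    ∃ p : ℕ, p.Prime ∧ (p : ℤ) ∣ (u ^ n - 1).norm ∧
      ∀ m : ℕ, 0 < m → m < n → ¬(p : ℤ) ∣ (u ^ m - 1).norm := by
  by_contra! hnone
  have hlt := four_pow_totient_lt_cyclotomicNorm (by omega : 2 ≤ n)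
  have hpos : 0 < cyclotomicNorm n := lt_trans (by positivity) hlt
  have hdvd : (cyclotomicNorm n).natAbs ∣ (2 * n) ^ 2 := by
    refine Nat.dvd_sq_of_forall_prime_dvd (by omega) fun p hp hpA => ?_
    have hpe : (p : ℤ) ∣ cyclotomicNorm n := Int.natCast_dvd.mpr hpA
    have hcube : ¬(p : ℤ) ^ 3 ∣ cyclotomicNorm n → ¬p ^ 3 ∣ (cyclotomicNorm n).natAbs :=
      fun h h3 => h (by exact_mod_cast Int.natCast_dvd.mpr h3)
    rcases eq_or_ne p 2 with rfl | hp2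
    · exact ⟨dvd_mul_right 2 n, hcube (by simpa using not_eight_dvd_cyclotomicNorm hn)⟩
    · obtain ⟨m, hm, hmn, hpm⟩ :=
        hnone p hp (hpe.trans (cyclotomicNorm_dvd_norm_pow_sub_one n))
      obtain ⟨hpn, hp3⟩ := dvd_and_not_pow_three_dvd_cyclotomicNorm hp hp2 hpe hm hmn hpm
      exact ⟨hpn.mul_left 2, hcube hp3⟩
  have hle : (2 * n) ^ 2 ≤ 4 ^ n.totient :=
    calc (2 * n) ^ 2 ≤ (2 ^ n.totient) ^ 2 :=
          Nat.pow_le_pow_left (two_mul_le_two_pow_totient hn hexc) 2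
      _ = 4 ^ n.totient := by rw [← pow_mul, mul_comm, pow_mul]; norm_num
  have hA := Nat.le_of_dvd (by positivity) hdvd
  have hA' : ((cyclotomicNorm n).natAbs : ℤ) = cyclotomicNorm n := Int.natAbs_of_nonneg hpos.le
  have hlt' : ((4 ^ n.totient : ℕ) : ℤ) < cyclotomicNorm n := by exact_mod_cast hlt
  omega

theorem exists_primitive_prime_dvd {n : ℕ} (hn : 3 ≤ n) :
    ∃ p : ℕ, p.Prime ∧ (p : ℤ) ∣ (u ^ n - 1).norm ∧
      ∀ m : ℕ, 0 < m → m < n → ¬(p : ℤ) ∣ (u ^ m - 1).norm := by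
  by_cases hexc : n ∈ ({3, 4, 6, 10, 12} : Finset ℕ)
  · simp only [Finset.mem_insert, Finset.mem_singleton] at hexc
    rcases hexc with rfl | rfl | rfl | rfl | rfl
    · exact ⟨7, by norm_num, by decide, fun m hm hmn => by interval_cases m <;> decide⟩
    · exact ⟨3, by norm_num, by decide, fun m hm hmn => by interval_cases m <;> decide⟩
    · exact ⟨5, by norm_num, by decide, fun m hm hmn => by interval_cases m <;> decide⟩
    · exact ⟨29, by norm_num, by decide, fun m hm hmn => by interval_cases m <;> decide⟩
    · exact ⟨11, by norm_num, by decide, fun m hm hmn => by interval_cases m <;> decide⟩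
  · exact exists_primitive_prime_dvd_of_notMem hn hexc

end LehmerPierce

/-- For `u = 3 + 2√2` and `Δ_n = N_{ℚ(√2)/ℚ}(u^n - 1)`: the listed initial values hold,
and every `Δ_n` with `n ≥ 3` has a primitive prime divisor. -/
theorem lehmerPierce_three_add_two_sqrt_two
    (Δ : ℕ → ℤ) (hΔ : ∀ n : ℕ, Δ n = Zsqrtd.norm ((⟨3, 2⟩ : ℤ√2) ^ n - 1)) :
    Δ 1 = -4 ∧ Δ 2 = -32 ∧ Δ 3 = -196 ∧ Δ 4 = -1152 ∧ Δ 5 = -6724 ∧ Δ 6 = -39200 ∧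
      ∀ n : ℕ, 3 ≤ n → ∃ p : ℕ, p.Prime ∧ (p : ℤ) ∣ Δ n ∧
        ∀ m : ℕ, 0 < m → m < n → Δ m ≠ 0 → ¬ (p : ℤ) ∣ Δ m := by
  simp only [hΔ]
  refine ⟨by decide, by decide, by decide, by decide, by decide, by decide, fun n hn => ?_⟩
  obtain ⟨p, hp, hpn, hprim⟩ := LehmerPierce.exists_primitive_prime_dvd hn
  exact ⟨p, hp, hpn, fun m hm hmn _ => hprim m hm hmn⟩
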